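/- arXiv:1509.04063 — 6 statements merged into one kernel-verified Lean document; each statement's English description precedes it below -/
import Mathlib

section
/- If a matrix Φ satisfies the (K, γ_K)-Null Space Property with 0 < τ ≤ 1, then for any vectors z, z' ∈ ℂ^N with Φz = Φz', one has ‖z' − z‖_{ℓτ}^τ ≤ (1+γ_K)/(1−γ_K) · ( ‖z'‖_{ℓτ}^τ − ‖z‖_{ℓτ}^τ + 2σ_K(z)_{ℓτ} ). -/
/-- The Null Space Property of order `K` with constant `γ` for exponent `τ`. -/
def NSP {m N : ℕ} (Φ : Matrix (Fin m) (Fin N) ℂ) (K : ℕ) (γ τ : ℝ) : Prop :=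
  ∀ η : Fin N → ℂ, Φ.mulVec η = 0 → η ≠ 0 →
    ∀ T : Finset (Fin N), T.card ≤ K →
      ∑ j ∈ T, ‖η j‖ ^ τ ≤ γ * ∑ j ∈ Tᶜ, ‖η j‖ ^ τ

/-- The best `K`-term approximation error of `z` in the `ℓτ` (quasi-)norm to the `τ`. -/
noncomputable def sigmaK {N : ℕ} (K : ℕ) (τ : ℝ) (z : Fin N → ℂ) : ℝ :=
  sInf {t : ℝ | ∃ w : Fin N → ℂ, Set.ncard {j | w j ≠ 0} ≤ K ∧ t = ∑ j, ‖z j - w j‖ ^ τ}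

private lemma real_rpow_add_le {τ : ℝ} (hτ0 : 0 ≤ τ) (hτ1 : τ ≤ 1) {x y : ℝ}
    (hx : 0 ≤ x) (hy : 0 ≤ y) : (x + y) ^ τ ≤ x ^ τ + y ^ τ := by
  lift x to NNReal using hx
  lift y to NNReal using hy
  have := NNReal.rpow_add_le_add_rpow x y hτ0 hτ1
  exact_mod_cast this

private lemma norm_sub_rpow_le {τ : ℝ} (hτ0 : 0 ≤ τ) (hτ1 : τ ≤ 1) (a b : ℂ) :
    ‖a - b‖ ^ τ ≤ ‖a‖ ^ τ + ‖b‖ ^ τ := by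
  calc ‖a - b‖ ^ τ ≤ (‖a‖ + ‖b‖) ^ τ :=
        Real.rpow_le_rpow (norm_nonneg _) (norm_sub_le _ _) hτ0
    _ ≤ ‖a‖ ^ τ + ‖b‖ ^ τ := real_rpow_add_le hτ0 hτ1 (norm_nonneg _) (norm_nonneg _)

theorem stmt_1 (m N K : ℕ) (τ γ : ℝ) (hτ0 : 0 < τ) (hτ1 : τ ≤ 1)
    (hγ0 : 0 < γ) (hγ1 : γ < 1)
    (Φ : Matrix (Fin m) (Fin N) ℂ) (hNSP : NSP Φ K γ τ)
    (z z' : Fin N → ℂ) (h : Φ.mulVec z = Φ.mulVec z') :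
    ∑ j, ‖z' j - z j‖ ^ τ ≤
      (1 + γ) / (1 - γ) *
        ((∑ j, ‖z' j‖ ^ τ) - (∑ j, ‖z j‖ ^ τ) + 2 * sigmaK K τ z) := by
  classical
  have hτ0' : 0 ≤ τ := hτ0.le
  have hnn : ∀ (v : Fin N → ℂ) (j : Fin N), 0 ≤ ‖v j‖ ^ τ := fun v j =>
    Real.rpow_nonneg (norm_nonneg _) _
  -- choose T of card ≤ K maximizing ∑_{j ∈ T} ‖z j‖ ^ τ
  obtain ⟨T, hTmem, hTmax⟩ :=
    ((Finset.univ : Finset (Finset (Fin N))).filter (fun T => T.card ≤ K)).exists_max_image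
      (fun T => ∑ j ∈ T, ‖z j‖ ^ τ) ⟨∅, by simp⟩
  have hTcard : T.card ≤ K := (Finset.mem_filter.mp hTmem).2
  set σ : ℝ := ∑ j ∈ Tᶜ, ‖z j‖ ^ τ with hσdef
  have hσ0 : 0 ≤ σ := Finset.sum_nonneg fun j _ => hnn z j
  have hcompl : ∀ S : Finset (Fin N), (∑ j ∈ S, ‖z j‖ ^ τ) + ∑ j ∈ Sᶜ, ‖z j‖ ^ τ
      = ∑ j, ‖z j‖ ^ τ := fun S => Finset.sum_add_sum_compl S _
  -- σ ≤ sigmaK K τ z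
  have hσK : σ ≤ sigmaK K τ z := by
    apply le_csInf
    · exact ⟨∑ j, ‖z j - (0 : Fin N → ℂ) j‖ ^ τ, 0, by simp, rfl⟩
    · rintro t ⟨w, hw, rfl⟩
      have hfin : {j | w j ≠ 0}.Finite := Set.toFinite _
      set S : Finset (Fin N) := hfin.toFinset with hSdef
      have hScard : S.card ≤ K := by
        rwa [Set.ncard_eq_toFinset_card _ hfin] at hw
      have hSle : (∑ j ∈ S, ‖z j‖ ^ τ) ≤ ∑ j ∈ T, ‖z j‖ ^ τ :=
        hTmax S (Finset.mem_filter.mpr ⟨Finset.mem_univ _, hScard⟩)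
      have h1 : σ ≤ ∑ j ∈ Sᶜ, ‖z j‖ ^ τ := by
        have := hcompl S
        have := hcompl T
        linarith
      calc σ ≤ ∑ j ∈ Sᶜ, ‖z j‖ ^ τ := h1
        _ = ∑ j ∈ Sᶜ, ‖z j - w j‖ ^ τ := by
            apply Finset.sum_congr rfl
            intro j hj
            have : w j = 0 := by
              by_contra hne
              exact (Finset.mem_compl.mp hj) (hfin.mem_toFinset.mpr hne)
            rw [this, sub_zero]
        _ ≤ ∑ j, ‖z j - w j‖ ^ τ :=
            Finset.sum_le_sum_of_subset_of_nonneg (Finset.subset_univ _)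
              (fun j _ _ => Real.rpow_nonneg (norm_nonneg _) _)
  set η : Fin N → ℂ := z' - z with hηdef
  have hηj : ∀ j, η j = z' j - z j := fun j => rfl
  have h1γ : 0 < 1 - γ := by linarith
  by_cases hη0 : η = 0
  · have hzz : z' = z := by
      funext j
      have := congrFun hη0 j
      simpa [hηj, sub_eq_zero] using this
    have hL : ∑ j, ‖z' j - z j‖ ^ τ = 0 := by
      rw [hzz]
      simp [Real.zero_rpow hτ0.ne']
    rw [hL, hzz]
    have : 0 ≤ sigmaK K τ z := le_trans hσ0 hσK
    have hpos : 0 ≤ (1 + γ) / (1 - γ) := div_nonneg (by linarith) h1γ.le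
    nlinarith
  · have hker : Φ.mulVec η = 0 := by
      rw [hηdef, Matrix.mulVec_sub, h, sub_self]
    have hN := hNSP η hker hη0 T hTcard
    set A : ℝ := ∑ j ∈ T, ‖η j‖ ^ τ with hAdef
    set B : ℝ := ∑ j ∈ Tᶜ, ‖η j‖ ^ τ with hBdef
    have hABtot : A + B = ∑ j, ‖η j‖ ^ τ := Finset.sum_add_sum_compl T _
    have hB0 : 0 ≤ B := Finset.sum_nonneg fun j _ => hnn η j
    -- B ≤ ∑_{Tᶜ} ‖z'‖^τ + σ
    have hB1 : B ≤ (∑ j ∈ Tᶜ, ‖z' j‖ ^ τ) + σ := by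
      rw [hσdef, ← Finset.sum_add_distrib]
      apply Finset.sum_le_sum
      intro j _
      rw [hηj]
      exact norm_sub_rpow_le hτ0' hτ1 _ _
    -- ∑_T ‖z‖^τ ≤ ∑_T ‖z'‖^τ + A
    have hT1 : (∑ j ∈ T, ‖z j‖ ^ τ) ≤ (∑ j ∈ T, ‖z' j‖ ^ τ) + A := by
      rw [hAdef, ← Finset.sum_add_distrib]
      apply Finset.sum_le_sum
      intro j _
      have : z j = z' j - η j := by rw [hηj]; ring
      rw [this]
      exact norm_sub_rpow_le hτ0' hτ1 _ _
    have hcomplz' : (∑ j ∈ T, ‖z' j‖ ^ τ) + ∑ j ∈ Tᶜ, ‖z' j‖ ^ τ = ∑ j, ‖z' j‖ ^ τ :=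
      Finset.sum_add_sum_compl T _
    have hcomplz := hcompl T
    have hD : B ≤ (∑ j, ‖z' j‖ ^ τ) - (∑ j, ‖z j‖ ^ τ) + 2 * σ + A := by linarith
    set D' : ℝ := (∑ j, ‖z' j‖ ^ τ) - (∑ j, ‖z j‖ ^ τ) + 2 * sigmaK K τ z with hD'def
    have hBD' : B * (1 - γ) ≤ D' := by nlinarith
    have hBle : B ≤ D' / (1 - γ) := (le_div_iff₀ h1γ).mpr hBD'
    have hsum : ∑ j, ‖z' j - z j‖ ^ τ = A + B := by
      rw [hABtot]
      exact Finset.sum_congr rfl fun j _ => by rw [hηj]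
    rw [hsum]
    have : A + B ≤ (1 + γ) * B := by nlinarith
    calc A + B ≤ (1 + γ) * B := this
      _ ≤ (1 + γ) * (D' / (1 - γ)) := by
          apply mul_le_mul_of_nonneg_left hBle (by linarith)
      _ = (1 + γ) / (1 - γ) * D' := by ring
end

section
/- Suppose Φ has the (K, γ_K)-NSP for 0 < τ ≤ 1 with γ_K < 1, and that the affine set {z : Φz = y} contains a K-sparse vector x*. Then x* is the unique minimizer of ‖·‖_{ℓτ} over {z : Φz = y}, and for every v with Φv = y one has ‖v − x*‖_{ℓτ}^τ ≤ 2·(1+γ_K)/(1−γ_K)·σ_K(v)_{ℓτ}. -/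
lemma rpow_norm_add_le {τ : ℝ} (hτ0 : 0 < τ) (hτ1 : τ ≤ 1) (a b : ℂ) :
    ‖a + b‖ ^ τ ≤ ‖a‖ ^ τ + ‖b‖ ^ τ := by
  calc ‖a + b‖ ^ τ ≤ (‖a‖ + ‖b‖) ^ τ :=
        Real.rpow_le_rpow (norm_nonneg _) (norm_add_le a b) hτ0.le
    _ ≤ ‖a‖ ^ τ + ‖b‖ ^ τ := by
        have h := NNReal.rpow_add_le_add_rpow ‖a‖₊ ‖b‖₊ hτ0.le hτ1
        have h2 := NNReal.coe_le_coe.mpr h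
        push_cast at h2
        simpa using h2

lemma card_support_le {N K : ℕ} (w : Fin N → ℂ) (h : Set.ncard {j | w j ≠ 0} ≤ K) :
    (Finset.univ.filter (fun j => w j ≠ 0)).card ≤ K := by
  have he : {j | w j ≠ 0} = ↑(Finset.univ.filter (fun j => w j ≠ 0)) := by
    ext j; simp
  rwa [he, Set.ncard_coe_finset] at h

theorem stmt_2 (m N K : ℕ) (τ γ : ℝ) (hτ0 : 0 < τ) (hτ1 : τ ≤ 1)
    (hγ0 : 0 < γ) (hγ1 : γ < 1)
    (Φ : Matrix (Fin m) (Fin N) ℂ) (hNSP : NSP Φ K γ τ)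
    (y : Fin m → ℂ) (xstar : Fin N → ℂ)
    (hxstar : Φ.mulVec xstar = y)
    (hsparse : Set.ncard {j | xstar j ≠ 0} ≤ K) :
    (∀ v : Fin N → ℂ, Φ.mulVec v = y → v ≠ xstar →
        ∑ j, ‖xstar j‖ ^ τ < ∑ j, ‖v j‖ ^ τ) ∧
    (∀ v : Fin N → ℂ, Φ.mulVec v = y →
        ∑ j, ‖v j - xstar j‖ ^ τ ≤ 2 * (1 + γ) / (1 - γ) * sigmaK K τ v) := by
  -- support of xstar
  set S : Finset (Fin N) := Finset.univ.filter (fun j => xstar j ≠ 0) with hS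
  have hScard : S.card ≤ K := card_support_le xstar hsparse
  have hx0 : ∀ j ∈ Sᶜ, xstar j = 0 := by
    intro j hj
    simp only [hS, Finset.mem_compl, Finset.mem_filter, Finset.mem_univ, true_and,
      not_not] at hj
    exact hj
  have hker : ∀ v : Fin N → ℂ, Φ.mulVec v = y → Φ.mulVec (v - xstar) = 0 := by
    intro v hv
    rw [Matrix.mulVec_sub, hv, hxstar, sub_self]
  have hnn : ∀ (u : Fin N → ℂ) (T : Finset (Fin N)), 0 ≤ ∑ j ∈ T, ‖u j‖ ^ τ := by
    intro u T
    exact Finset.sum_nonneg fun j _ => Real.rpow_nonneg (norm_nonneg _) τ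
  -- part 1 (strict minimality)
  have part1 : ∀ v : Fin N → ℂ, Φ.mulVec v = y → v ≠ xstar →
      ∑ j, ‖xstar j‖ ^ τ < ∑ j, ‖v j‖ ^ τ := by
    intro v hv hne
    set η : Fin N → ℂ := v - xstar with hη
    have hηne : η ≠ 0 := sub_ne_zero.mpr hne
    have hN := hNSP η (hker v hv) hηne S hScard
    have hηc : ∀ j ∈ Sᶜ, η j = v j := by
      intro j hj; simp [hη, hx0 j hj]
    -- on Sᶜ, ‖η‖ = ‖v‖
    have hBeq : ∑ j ∈ Sᶜ, ‖η j‖ ^ τ = ∑ j ∈ Sᶜ, ‖v j‖ ^ τ :=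
      Finset.sum_congr rfl fun j hj => by rw [hηc j hj]
    -- positivity of tail
    have hpos : 0 < ∑ j ∈ Sᶜ, ‖v j‖ ^ τ := by
      rcases (hnn v Sᶜ).lt_or_eq with h | h
      · exact h
      · exfalso
        have hall : ∀ j ∈ Sᶜ, ‖v j‖ ^ τ = 0 := by
          intro j hj
          have := Finset.sum_eq_zero_iff_of_nonneg
            (fun j _ => Real.rpow_nonneg (norm_nonneg _) τ) |>.mp h.symm
          exact this j hj
        have hB0 : ∑ j ∈ Sᶜ, ‖η j‖ ^ τ = 0 := by rw [hBeq, ← h]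
        have hA0 : ∑ j ∈ S, ‖η j‖ ^ τ ≤ 0 := by
          calc ∑ j ∈ S, ‖η j‖ ^ τ ≤ γ * ∑ j ∈ Sᶜ, ‖η j‖ ^ τ := hN
            _ = 0 := by rw [hB0, mul_zero]
        have hη0 : ∀ j, η j = 0 := by
          intro j
          by_cases hjS : j ∈ S
          · have := Finset.sum_eq_zero_iff_of_nonneg
              (fun j _ => Real.rpow_nonneg (norm_nonneg _) τ) |>.mp
              (le_antisymm hA0 (hnn η S))
            have hz := this j hjS
            have : ‖η j‖ = 0 :=
              ((Real.rpow_eq_zero_iff_of_nonneg (norm_nonneg _)).mp hz).1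
            simpa using this
          · rw [hηc j (Finset.mem_compl.mpr hjS)]
            have hz := hall j (Finset.mem_compl.mpr hjS)
            have : ‖v j‖ = 0 :=
              ((Real.rpow_eq_zero_iff_of_nonneg (norm_nonneg _)).mp hz).1
            simpa using this
        exact hηne (funext hη0)
    -- main chain
    have hzero : ∀ j ∈ Sᶜ, ‖xstar j‖ ^ τ = 0 := by
      intro j hj
      rw [hx0 j hj]
      simp [Real.zero_rpow hτ0.ne']
    have hxsum : ∑ j, ‖xstar j‖ ^ τ = ∑ j ∈ S, ‖xstar j‖ ^ τ := by
      rw [← Finset.sum_add_sum_compl S, Finset.sum_eq_zero hzero, add_zero]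
    have htri : ∀ j, ‖xstar j‖ ^ τ ≤ ‖v j‖ ^ τ + ‖η j‖ ^ τ := by
      intro j
      have : xstar j = v j + (-(η j)) := by simp [hη]
      calc ‖xstar j‖ ^ τ = ‖v j + (-(η j))‖ ^ τ := by rw [← this]
        _ ≤ ‖v j‖ ^ τ + ‖-(η j)‖ ^ τ := rpow_norm_add_le hτ0 hτ1 _ _
        _ = ‖v j‖ ^ τ + ‖η j‖ ^ τ := by rw [norm_neg]
    calc ∑ j, ‖xstar j‖ ^ τ = ∑ j ∈ S, ‖xstar j‖ ^ τ := hxsum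
      _ ≤ ∑ j ∈ S, (‖v j‖ ^ τ + ‖η j‖ ^ τ) := Finset.sum_le_sum fun j _ => htri j
      _ = ∑ j ∈ S, ‖v j‖ ^ τ + ∑ j ∈ S, ‖η j‖ ^ τ := Finset.sum_add_distrib
      _ ≤ ∑ j ∈ S, ‖v j‖ ^ τ + γ * ∑ j ∈ Sᶜ, ‖η j‖ ^ τ := by linarith [hN]
      _ = ∑ j ∈ S, ‖v j‖ ^ τ + γ * ∑ j ∈ Sᶜ, ‖v j‖ ^ τ := by rw [hBeq]
      _ < ∑ j ∈ S, ‖v j‖ ^ τ + ∑ j ∈ Sᶜ, ‖v j‖ ^ τ := by nlinarith [hpos]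
      _ = ∑ j, ‖v j‖ ^ τ := Finset.sum_add_sum_compl S _
  refine ⟨part1, ?_⟩
  -- non-strict minimality
  have hmin : ∀ v : Fin N → ℂ, Φ.mulVec v = y →
      ∑ j, ‖xstar j‖ ^ τ ≤ ∑ j, ‖v j‖ ^ τ := by
    intro v hv
    by_cases hne : v = xstar
    · rw [hne]
    · exact (part1 v hv hne).le
  -- part 2
  intro v hv
  set C : ℝ := 2 * (1 + γ) / (1 - γ) with hC
  have hγd : (0:ℝ) < 1 - γ := by linarith
  have hCpos : 0 < C := by positivity
  set L : ℝ := ∑ j, ‖v j - xstar j‖ ^ τ with hL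
  have hLnn : 0 ≤ L := hnn _ _
  -- key: L ≤ C * t for every element t of the defining set of sigmaK
  have key : ∀ t ∈ {t : ℝ | ∃ w : Fin N → ℂ, Set.ncard {j | w j ≠ 0} ≤ K ∧
      t = ∑ j, ‖v j - w j‖ ^ τ}, L ≤ C * t := by
    rintro t ⟨w, hwK, rfl⟩
    set E : ℝ := ∑ j, ‖v j - w j‖ ^ τ with hE
    have hEnn : 0 ≤ E := hnn _ _
    by_cases hne : v = xstar
    · have : L = 0 := by
        rw [hL, hne]; simp [Real.zero_rpow hτ0.ne']
      rw [this]; positivity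
    · set η : Fin N → ℂ := v - xstar with hη
      have hηne : η ≠ 0 := sub_ne_zero.mpr hne
      set W : Finset (Fin N) := Finset.univ.filter (fun j => w j ≠ 0) with hW
      have hWcard : W.card ≤ K := card_support_le w hwK
      have hw0 : ∀ j ∈ Wᶜ, w j = 0 := by
        intro j hj
        simp only [hW, Finset.mem_compl, Finset.mem_filter, Finset.mem_univ, true_and,
          not_not] at hj
        exact hj
      have hN := hNSP η (hker v hv) hηne W hWcard
      set A : ℝ := ∑ j ∈ W, ‖η j‖ ^ τ with hA
      set B : ℝ := ∑ j ∈ Wᶜ, ‖η j‖ ^ τ with hB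
      have hAnn : 0 ≤ A := hnn _ _
      have hBnn : 0 ≤ B := hnn _ _
      -- B ≤ ∑_{Wᶜ} ‖xstar‖^τ + E
      have h1 : B ≤ (∑ j ∈ Wᶜ, ‖xstar j‖ ^ τ) + E := by
        have hpt : ∀ j ∈ Wᶜ, ‖η j‖ ^ τ ≤ ‖v j - w j‖ ^ τ + ‖xstar j‖ ^ τ := by
          intro j hj
          have hdecomp : η j = (v j - w j) + (-(xstar j)) := by
            simp [hη, hw0 j hj]; ring
          calc ‖η j‖ ^ τ = ‖(v j - w j) + (-(xstar j))‖ ^ τ := by rw [← hdecomp]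
            _ ≤ ‖v j - w j‖ ^ τ + ‖-(xstar j)‖ ^ τ := rpow_norm_add_le hτ0 hτ1 _ _
            _ = ‖v j - w j‖ ^ τ + ‖xstar j‖ ^ τ := by rw [norm_neg]
        calc B ≤ ∑ j ∈ Wᶜ, (‖v j - w j‖ ^ τ + ‖xstar j‖ ^ τ) :=
              Finset.sum_le_sum hpt
          _ = (∑ j ∈ Wᶜ, ‖v j - w j‖ ^ τ) + ∑ j ∈ Wᶜ, ‖xstar j‖ ^ τ :=
              Finset.sum_add_distrib
          _ ≤ E + ∑ j ∈ Wᶜ, ‖xstar j‖ ^ τ := by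
              have : ∑ j ∈ Wᶜ, ‖v j - w j‖ ^ τ ≤ E := by
                rw [hE, ← Finset.sum_add_sum_compl W (fun j => ‖v j - w j‖ ^ τ)]
                have : 0 ≤ ∑ j ∈ W, ‖v j - w j‖ ^ τ :=
                  Finset.sum_nonneg fun j _ => Real.rpow_nonneg (norm_nonneg _) τ
                linarith
              linarith
          _ = (∑ j ∈ Wᶜ, ‖xstar j‖ ^ τ) + E := by ring
      -- ∑_{Wᶜ} ‖xstar‖^τ ≤ A + E
      have h2 : (∑ j ∈ Wᶜ, ‖xstar j‖ ^ τ) ≤ A + E := by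
        have hminv := hmin v hv
        have hsplitx : ∑ j, ‖xstar j‖ ^ τ
            = (∑ j ∈ W, ‖xstar j‖ ^ τ) + ∑ j ∈ Wᶜ, ‖xstar j‖ ^ τ :=
          (Finset.sum_add_sum_compl W _).symm
        have hsplitv : ∑ j, ‖v j‖ ^ τ
            = (∑ j ∈ W, ‖v j‖ ^ τ) + ∑ j ∈ Wᶜ, ‖v j‖ ^ τ :=
          (Finset.sum_add_sum_compl W _).symm
        have htailv : ∑ j ∈ Wᶜ, ‖v j‖ ^ τ ≤ E := by
          have heq : ∀ j ∈ Wᶜ, ‖v j‖ ^ τ = ‖v j - w j‖ ^ τ := by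
            intro j hj; rw [hw0 j hj, sub_zero]
          rw [Finset.sum_congr rfl heq, hE,
            ← Finset.sum_add_sum_compl W (fun j => ‖v j - w j‖ ^ τ)]
          have : 0 ≤ ∑ j ∈ W, ‖v j - w j‖ ^ τ :=
            Finset.sum_nonneg fun j _ => Real.rpow_nonneg (norm_nonneg _) τ
          linarith
        have hWv : (∑ j ∈ W, ‖v j‖ ^ τ) - ∑ j ∈ W, ‖xstar j‖ ^ τ ≤ A := by
          rw [hA, ← Finset.sum_sub_distrib]
          apply Finset.sum_le_sum
          intro j _
          have : ‖v j‖ ^ τ ≤ ‖η j‖ ^ τ + ‖xstar j‖ ^ τ := by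
            have : v j = η j + xstar j := by simp [hη]
            calc ‖v j‖ ^ τ = ‖η j + xstar j‖ ^ τ := by rw [← this]
              _ ≤ ‖η j‖ ^ τ + ‖xstar j‖ ^ τ := rpow_norm_add_le hτ0 hτ1 _ _
          linarith
        linarith
      -- combine
      have hBbound : B ≤ γ * B + 2 * E := by
        have : A ≤ γ * B := hN
        linarith
      have hLsplit : L = A + B := by
        rw [hL, hA, hB, ← Finset.sum_add_sum_compl W (fun j => ‖v j - xstar j‖ ^ τ)]
        rfl
      have hBle : B ≤ 2 * E / (1 - γ) := by
        rw [le_div_iff₀ hγd]; nlinarith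
      have : L ≤ (1 + γ) * B := by
        rw [hLsplit]
        have : A ≤ γ * B := hN
        nlinarith
      calc L ≤ (1 + γ) * B := this
        _ ≤ (1 + γ) * (2 * E / (1 - γ)) := by
            apply mul_le_mul_of_nonneg_left hBle (by linarith)
        _ = C * E := by rw [hC]; field_simp
  -- conclude via sInf
  have hmem : (∑ j, ‖v j‖ ^ τ) ∈ {t : ℝ | ∃ w : Fin N → ℂ,
      Set.ncard {j | w j ≠ 0} ≤ K ∧ t = ∑ j, ‖v j - w j‖ ^ τ} := by
    refine ⟨0, by simp, by simp⟩
  have hlow : L / C ≤ sigmaK K τ v := by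
    apply le_csInf ⟨_, hmem⟩
    intro t ht
    rw [div_le_iff₀ hCpos]
    calc L ≤ C * t := key t ht
      _ = t * C := mul_comm _ _
  calc L ≤ (L / C) * C := by rw [div_mul_cancel₀]; exact hCpos.ne'
    _ ≤ sigmaK K τ v * C := mul_le_mul_of_nonneg_right hlow hCpos.le
    _ = C * sigmaK K τ v := mul_comm _ _
end

section
/- For fixed x ∈ ℂ^N and ε > 0, the unique minimizer over weights w > 0 of the functional J_τ(x, w, ε) = (τ/2)[ Σ_j |x_j|^2 w_j + Σ_j ( ε^2 w_j + ((2−τ)/τ) w_j^{−τ/(2−τ)} ) ] is given componentwise by w_j = (|x_j|^2 + ε^2)^{−(2−τ)/2}. -/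
/-!
Writing `a_j = |x_j|² + ε²` and `p = τ / (2 - τ)`, the functional is `τ/2 · ∑ⱼ (a_j w_j + p⁻¹ w_j^(-p))`,
a sum of one-variable functions of the separate weights. After the substitution `w = t · a^(-1/(p+1))`
each summand becomes `a^(p/(p+1)) · (t + p⁻¹ t^(-p))`, and the weighted AM-GM inequality with weights
`p/(p+1)` and `1/(p+1)` applied to `t` and `t^(-p)` shows that `t + p⁻¹ t^(-p) > 1 + p⁻¹` unless `t = 1`.
-/

open Real

/-- The IRLS functional `J_τ(x, w, ε)`. -/
noncomputable def Jfun {N : ℕ} (τ : ℝ) (x : Fin N → ℂ) (w : Fin N → ℝ) (ε : ℝ) : ℝ :=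
  (τ / 2) * ((∑ j, ‖x j‖ ^ 2 * w j) +
    ∑ j, (ε ^ 2 * w j + ((2 - τ) / τ) * (w j) ^ (-(τ / (2 - τ)))))

lemma Finset.sum_apply_lt_sum_apply_of_strict_min {ι α M : Type*} [Fintype ι]
    [AddCommMonoid M] [PartialOrder M] [IsOrderedCancelAddMonoid M] (f : ι → α → M) (S : Set α)
    (v₀ : ι → α) (hmin : ∀ i, ∀ v ∈ S, v ≠ v₀ i → f i (v₀ i) < f i v)
    {v : ι → α} (hv : ∀ i, v i ∈ S) (hne : v ≠ v₀) :
    ∑ i, f i (v₀ i) < ∑ i, f i (v i) := by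
  obtain ⟨i₀, hi₀⟩ := Function.ne_iff.mp hne
  refine Finset.sum_lt_sum (fun i _ ↦ ?_) ⟨i₀, Finset.mem_univ _, hmin i₀ _ (hv i₀) hi₀⟩
  by_cases h : v i = v₀ i
  · rw [h]
  · exact (hmin i _ (hv i) h).le

lemma rpow_neg_ne_self {p t : ℝ} (hp : 0 < p) (ht : 0 < t) (hne : t ≠ 1) : t ^ (-p) ≠ t := by
  rcases hne.lt_or_gt with hlt | hgt
  · exact (hlt.trans (one_lt_rpow_of_pos_of_lt_one_of_neg ht hlt (neg_neg_of_pos hp))).ne'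
  · exact ((rpow_lt_one_of_one_lt_of_neg hgt (neg_neg_of_pos hp)).trans hgt).ne

lemma one_add_inv_lt_add_inv_mul_rpow_neg {p t : ℝ} (hp : 0 < p) (ht : 0 < t) (hne : t ≠ 1) :
    1 + p⁻¹ < t + p⁻¹ * t ^ (-p) := by
  have hp1 : 0 < p + 1 := by linarith
  have hgm : t ^ (p / (p + 1)) * (t ^ (-p)) ^ (1 / (p + 1)) = 1 := by
    rw [← rpow_mul ht.le, ← rpow_add ht, show p / (p + 1) + -p * (1 / (p + 1)) = 0 by ring,
      rpow_zero]
  have hamgm := (geom_mean_lt_arith_mean2_weighted_iff_of_pos (div_pos hp hp1)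
    (div_pos one_pos hp1) ht.le (rpow_nonneg ht.le _) (by field_simp)).2
    (rpow_neg_ne_self hp ht hne).symm
  rw [hgm] at hamgm
  calc 1 + p⁻¹ = (p + 1) / p * 1 := by field_simp
    _ < (p + 1) / p * (p / (p + 1) * t + 1 / (p + 1) * t ^ (-p)) :=
        mul_lt_mul_of_pos_left hamgm (by positivity)
    _ = t + p⁻¹ * t ^ (-p) := by field_simp

lemma mul_add_inv_mul_rpow_neg_lt {p a w : ℝ} (hp : 0 < p) (ha : 0 < a) (hw : 0 < w)
    (hne : w ≠ a ^ (-(p + 1)⁻¹)) :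
    a * a ^ (-(p + 1)⁻¹) + p⁻¹ * (a ^ (-(p + 1)⁻¹)) ^ (-p) < a * w + p⁻¹ * w ^ (-p) := by
  set w₀ := a ^ (-(p + 1)⁻¹)
  have hw₀ : 0 < w₀ := rpow_pos_of_pos ha _
  have hbalance : a * w₀ = w₀ ^ (-p) := by
    rw [← rpow_mul ha.le]
    calc a * w₀ = a ^ (1 + -(p + 1)⁻¹) := by rw [rpow_add ha, rpow_one]
      _ = a ^ (-(p + 1)⁻¹ * -p) := by congr 1; field_simp; ring
  set t := w / w₀
  have ht : 0 < t := div_pos hw hw₀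
  have hwt : w = t * w₀ := (div_mul_cancel₀ w hw₀.ne').symm
  have htne : t ≠ 1 := fun h ↦ hne (by rw [hwt, h, one_mul])
  calc a * w₀ + p⁻¹ * w₀ ^ (-p) = a * w₀ * (1 + p⁻¹) := by rw [← hbalance]; ring
    _ < a * w₀ * (t + p⁻¹ * t ^ (-p)) :=
        mul_lt_mul_of_pos_left (one_add_inv_lt_add_inv_mul_rpow_neg hp ht htne) (by positivity)
    _ = a * w + p⁻¹ * w ^ (-p) := by
        rw [hwt, mul_rpow ht.le hw₀.le, ← hbalance]
        ring

lemma Jfun_eq_sum {N : ℕ} (τ : ℝ) (x : Fin N → ℂ) (w : Fin N → ℝ) (ε : ℝ) :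
    Jfun τ x w ε =
      τ / 2 * ∑ j, ((‖x j‖ ^ 2 + ε ^ 2) * w j + (2 - τ) / τ * w j ^ (-(τ / (2 - τ)))) := by
  rw [Jfun, ← Finset.sum_add_distrib]
  congr 1
  exact Finset.sum_congr rfl fun j _ ↦ by ring

theorem stmt_5 (N : ℕ) (τ ε : ℝ) (hτ0 : 0 < τ) (hτ1 : τ ≤ 1) (hε : 0 < ε)
    (x : Fin N → ℂ) (wopt : Fin N → ℝ)
    (hwopt : ∀ j, wopt j = (‖x j‖ ^ 2 + ε ^ 2) ^ (-((2 - τ) / 2))) :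
    (∀ j, 0 < wopt j) ∧
    ∀ w : Fin N → ℝ, (∀ j, 0 < w j) → w ≠ wopt →
      Jfun τ x wopt ε < Jfun τ x w ε := by
  have h2τ : 0 < 2 - τ := by linarith
  set p := τ / (2 - τ)
  have hp : 0 < p := div_pos hτ0 h2τ
  have hcoeff : (2 - τ) / τ = p⁻¹ := (inv_div τ (2 - τ)).symm
  have hexp : (2 - τ) / 2 = (p + 1)⁻¹ := by simp only [p]; field_simp; ring
  have ha : ∀ j, 0 < ‖x j‖ ^ 2 + ε ^ 2 := fun j ↦ by positivity
  simp only [hexp] at hwopt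
  refine ⟨fun j ↦ hwopt j ▸ rpow_pos_of_pos (ha j) _, fun w hw hne ↦ ?_⟩
  rw [Jfun_eq_sum, Jfun_eq_sum, hcoeff]
  refine mul_lt_mul_of_pos_left ?_ (by positivity)
  refine Finset.sum_apply_lt_sum_apply_of_strict_min
    (fun j v ↦ (‖x j‖ ^ 2 + ε ^ 2) * v + p⁻¹ * v ^ (-p)) (Set.Ioi 0) wopt
    (fun j v hv hvne ↦ ?_) hw hne
  rw [hwopt j] at hvne ⊢
  exact mul_add_inv_mul_rpow_neg_lt hp (ha j) hv hvne
end

section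
/- In the IRLS algorithm the functional J_τ is monotone under the weight update and the ε update: J_τ(x̃^{n+1}, w^{n+1}, ε^{n+1}) ≤ J_τ(x̃^{n+1}, w^n, ε^{n+1}) ≤ J_τ(x̃^{n+1}, w^n, ε^n). -/
theorem stmt_8 (N : ℕ) (τ : ℝ) (hτ0 : 0 < τ) (hτ1 : τ ≤ 1)
    (xtil : Fin N → ℂ) (wn wn1 : Fin N → ℝ) (εn εn1 : ℝ)
    (hεn1 : 0 < εn1) (hεle : εn1 ≤ εn)
    (hwn : ∀ j, 0 < wn j) (hwn1 : ∀ j, 0 < wn1 j)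
    (hargmin : ∀ w : Fin N → ℝ, (∀ j, 0 < w j) →
      Jfun τ xtil wn1 εn1 ≤ Jfun τ xtil w εn1) :
    Jfun τ xtil wn1 εn1 ≤ Jfun τ xtil wn εn1 ∧
    Jfun τ xtil wn εn1 ≤ Jfun τ xtil wn εn := by
  refine ⟨hargmin wn hwn, ?_⟩
  unfold Jfun
  have h2 : εn1 ^ 2 ≤ εn ^ 2 := by nlinarith
  gcongr with j _ j _
  exact (hwn j).le
end

section
/- Under a uniform lower bound w_j^n ≥ C^{−(2−τ)/τ} on the weights, the exact IRLS iterates satisfy Σ_{n=1}^∞ ‖x̂^{n+1} − x̂^n‖_{ℓ2}^2 ≤ (2/τ)·C^{2/τ}; in particular ‖x̂^{n+1} − x̂^n‖_{ℓ2} → 0. -/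
/-
Summing the key inequality telescopes the functional `J_τ`, which is nonnegative, so the
weighted squared increments have total mass at most `J_τ(x̂¹, w¹, ε¹) + 2 ∑ aₙ ≤ C`. The uniform
lower bound `C^{-(2-τ)/τ}` on the weights turns this into the unweighted bound, and
`C / ((τ/2) C^{-(2-τ)/τ}) = (2/τ) C^{2/τ}`.
-/

open Finset

lemma Jfun_nonneg {N : ℕ} {τ ε : ℝ} (x : Fin N → ℂ) {w : Fin N → ℝ}
    (hτ0 : 0 < τ) (hτ2 : τ ≤ 2) (hw : ∀ j, 0 ≤ w j) : 0 ≤ Jfun τ x w ε := by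
  have hcoef : 0 ≤ (2 - τ) / τ := div_nonneg (by linarith) hτ0.le
  unfold Jfun
  refine mul_nonneg (by positivity) (add_nonneg ?_ ?_)
  · exact sum_nonneg fun j _ => mul_nonneg (by positivity) (hw j)
  · exact sum_nonneg fun j _ => add_nonneg (mul_nonneg (sq_nonneg _) (hw j))
      (mul_nonneg hcoef (Real.rpow_nonneg (hw j) _))

lemma mul_sum_sq_norm_le_sum_sq_norm_mul {ι E : Type*} [Fintype ι] [SeminormedAddCommGroup E]
    (v : ι → E) {w : ι → ℝ} {c : ℝ} (hc : ∀ j, c ≤ w j) :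
    c * ∑ j, ‖v j‖ ^ 2 ≤ ∑ j, ‖v j‖ ^ 2 * w j := by
  rw [mul_sum]
  exact sum_le_sum fun j _ => by rw [mul_comm]; gcongr; exact hc j

lemma summable_and_tsum_le_of_le_sub_add {J d b : ℕ → ℝ} (hJ : ∀ n, 0 ≤ J n)
    (hd0 : ∀ n, 0 ≤ d n) (hb0 : ∀ n, 0 ≤ b n) (hb : Summable b)
    (hd : ∀ n, d n ≤ J n - J (n + 1) + b n) :
    Summable d ∧ ∑' n, d n ≤ J 0 + ∑' n, b n := by
  have hpartial : ∀ M, ∑ n ∈ range M, d n ≤ J 0 + ∑' n, b n := fun M =>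
    calc ∑ n ∈ range M, d n
        ≤ ∑ n ∈ range M, (J n - J (n + 1) + b n) := sum_le_sum fun n _ => hd n
      _ = J 0 - J M + ∑ n ∈ range M, b n := by
          rw [sum_add_distrib, sum_range_sub' J]
      _ ≤ J 0 + ∑' n, b n := by
          linarith [hJ M, hb.sum_le_tsum (range M) (fun n _ => hb0 n)]
  have hsum : Summable d := summable_of_sum_range_le hd0 hpartial
  exact ⟨hsum, hsum.tsum_le_of_sum_range_le hpartial⟩

lemma half_mul_rpow_neg_mul_two_div_mul_rpow {τ C : ℝ} (hτ : τ ≠ 0) (hC : 0 < C) :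
    τ / 2 * C ^ (-((2 - τ) / τ)) * ((2 / τ) * C ^ ((2 : ℝ) / τ)) = C := by
  have hexp : -((2 - τ) / τ) + 2 / τ = 1 := by field_simp; ring
  calc τ / 2 * C ^ (-((2 - τ) / τ)) * ((2 / τ) * C ^ ((2 : ℝ) / τ))
      = (τ / 2 * (2 / τ)) * C ^ (-((2 - τ) / τ) + 2 / τ) := by
        rw [Real.rpow_add hC]; ring
    _ = C := by rw [hexp, Real.rpow_one]; field_simp

lemma tsum_nat_add_le {a : ℕ → ℝ} (ha : ∀ n, 0 ≤ a n) (hasum : Summable a) (k : ℕ) :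
    ∑' n, a (n + k) ≤ ∑' n, a n := by
  rw [← hasum.sum_add_tsum_nat_add k]
  exact le_add_of_nonneg_left (sum_nonneg fun n _ => ha n)

theorem stmt_11_general (N : ℕ) (τ C : ℝ) (hτ0 : 0 < τ) (hτ1 : τ ≤ 1) (hC : 0 < C)
    (xhat : ℕ → Fin N → ℂ) (w : ℕ → Fin N → ℝ) (ε a : ℕ → ℝ)
    (ha : ∀ n, 0 ≤ a n) (hasum : Summable a)
    (hwlb : ∀ n j, C ^ (-((2 - τ) / τ)) ≤ w n j)
    (hkey : ∀ n, (τ / 2) * ∑ j, ‖xhat n j - xhat (n + 1) j‖ ^ 2 * w n j ≤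
      Jfun τ (xhat n) (w n) (ε n) - Jfun τ (xhat (n + 1)) (w (n + 1)) (ε (n + 1))
        + 2 * a (n + 1))
    (hC1 : Jfun τ (xhat 1) (w 1) (ε 1) + 2 * ∑' n, a n ≤ C) :
    Summable (fun n : ℕ => ∑ j, ‖xhat (n + 1 + 1) j - xhat (n + 1) j‖ ^ 2) ∧
    (∑' n : ℕ, ∑ j, ‖xhat (n + 1 + 1) j - xhat (n + 1) j‖ ^ 2) ≤
      (2 / τ) * C ^ ((2 : ℝ) / τ) ∧
    Filter.Tendsto (fun n : ℕ => Real.sqrt (∑ j, ‖xhat (n + 1) j - xhat n j‖ ^ 2))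
      Filter.atTop (nhds 0) := by
  set f : ℕ → ℝ := fun n => ∑ j, ‖xhat (n + 1 + 1) j - xhat (n + 1) j‖ ^ 2
  set c : ℝ := τ / 2 * C ^ (-((2 - τ) / τ))
  have hw0 : 0 < C ^ (-((2 - τ) / τ)) := Real.rpow_pos_of_pos hC _
  have hc : 0 < c := by positivity
  have hstep : ∀ n, c * f n ≤ Jfun τ (xhat (n + 1)) (w (n + 1)) (ε (n + 1))
      - Jfun τ (xhat (n + 1 + 1)) (w (n + 1 + 1)) (ε (n + 1 + 1)) + 2 * a (n + 2) := by
    intro n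
    refine le_trans ?_ (hkey (n + 1))
    simp only [c, f, mul_assoc, ← norm_sub_rev (xhat (n + 1 + 1) _)]
    gcongr
    exact mul_sum_sq_norm_le_sum_sq_norm_mul _ (hwlb (n + 1))
  obtain ⟨hcf, hcf_le⟩ := summable_and_tsum_le_of_le_sub_add
    (fun n => Jfun_nonneg _ hτ0 (by linarith) fun j => hw0.le.trans (hwlb _ j))
    (fun n => mul_nonneg hc.le (sum_nonneg fun j _ => sq_nonneg _))
    (fun n => mul_nonneg two_pos.le (ha _))
    ((hasum.comp_injective (add_left_injective 2)).mul_left 2) hstep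
  have hf : Summable f := (summable_mul_left_iff hc.ne').mp hcf
  have hf_le : ∑' n, f n ≤ (2 / τ) * C ^ ((2 : ℝ) / τ) := by
    refine le_of_mul_le_mul_left ?_ hc
    rw [half_mul_rpow_neg_mul_two_div_mul_rpow hτ0.ne' hC, ← tsum_mul_left]
    refine hcf_le.trans ?_
    rw [tsum_mul_left]
    linarith [tsum_nat_add_le ha hasum 2]
  refine ⟨hf, hf_le, ?_⟩
  have hdiff : Filter.Tendsto (fun n => ∑ j, ‖xhat (n + 1) j - xhat n j‖ ^ 2)
      Filter.atTop (nhds 0) :=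
    (Filter.tendsto_add_atTop_iff_nat 1).mp hf.tendsto_atTop_zero
  simpa using hdiff.sqrt

theorem stmt_11 (m N : ℕ) (τ C : ℝ) (hτ0 : 0 < τ) (hτ1 : τ ≤ 1) (hC : 0 < C)
    (Φ : Matrix (Fin m) (Fin N) ℂ) (y : Fin m → ℂ)
    (xhat : ℕ → Fin N → ℂ) (w : ℕ → Fin N → ℝ) (ε a : ℕ → ℝ)
    (hε : ∀ n, 0 < ε n) (ha : ∀ n, 0 ≤ a n) (hasum : Summable a)
    (hwlb : ∀ n j, C ^ (-((2 - τ) / τ)) ≤ w n j)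
    (hfeas : ∀ n, Φ.mulVec (xhat n) = y)
    (hmin : ∀ n, ∀ z : Fin N → ℂ, Φ.mulVec z = y →
      ∑ j, ‖xhat (n + 1) j‖ ^ 2 * w n j ≤ ∑ j, ‖z j‖ ^ 2 * w n j)
    (hkey : ∀ n, (τ / 2) * ∑ j, ‖xhat n j - xhat (n + 1) j‖ ^ 2 * w n j ≤
      Jfun τ (xhat n) (w n) (ε n) - Jfun τ (xhat (n + 1)) (w (n + 1)) (ε (n + 1))
        + 2 * a (n + 1))
    (hC1 : Jfun τ (xhat 1) (w 1) (ε 1) + 2 * ∑' n, a n ≤ C) :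
    Summable (fun n : ℕ => ∑ j, ‖xhat (n + 1 + 1) j - xhat (n + 1) j‖ ^ 2) ∧
    (∑' n : ℕ, ∑ j, ‖xhat (n + 1 + 1) j - xhat (n + 1) j‖ ^ 2) ≤
      (2 / τ) * C ^ ((2 : ℝ) / τ) ∧
    Filter.Tendsto (fun n : ℕ => Real.sqrt (∑ j, ‖xhat (n + 1) j - xhat n j‖ ^ 2))
      Filter.atTop (nhds 0) :=
  stmt_11_general N τ C hτ0 hτ1 hC xhat w ε a ha hasum hwlb hkey hC1
end

section
/- For any J > j and any x, x' ∈ ℂ^N, (J − j)·r(x)_J^τ ≤ ‖x − x'‖_{ℓτ}^τ + σ_j(x')_{ℓτ}, where r(x)_J is the J-th largest entry of |x| and σ_j(x')_{ℓτ} is the best j-term approximation error of x' in ℓτ. -/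
lemma my_rpow_add_le {a b τ : ℝ} (ha : 0 ≤ a) (hb : 0 ≤ b) (hτ0 : 0 < τ) (hτ1 : τ ≤ 1) :
    (a + b) ^ τ ≤ a ^ τ + b ^ τ := by
  have h := NNReal.rpow_add_le_add_rpow a.toNNReal b.toNNReal hτ0.le hτ1
  have h2 := NNReal.coe_le_coe.2 h
  simpa [NNReal.coe_rpow, Real.coe_toNNReal _ ha, Real.coe_toNNReal _ hb,
    Real.coe_toNNReal _ (add_nonneg ha hb), ← Real.toNNReal_add ha hb] using h2

theorem stmt_14 (N : ℕ) (τ : ℝ) (hτ0 : 0 < τ) (hτ1 : τ ≤ 1)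
    (x x' : Fin N → ℂ) (r r' : Fin N → ℝ)
    (σ : Equiv.Perm (Fin N)) (hr : ∀ i, r i = ‖x (σ i)‖) (hrA : Antitone r)
    (σ' : Equiv.Perm (Fin N)) (hr' : ∀ i, r' i = ‖x' (σ' i)‖) (hr'A : Antitone r')
    (j J : ℕ) (hjJ : j < J) (hJ : J ≤ N) :
    ((J : ℝ) - j) * r ⟨J - 1, by omega⟩ ^ τ ≤
      (∑ i, ‖x i - x' i‖ ^ τ) +
        ∑ i ∈ Finset.univ.filter (fun i : Fin N => j ≤ (i : ℕ)), r' i ^ τ := by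
  classical
  set rJ : ℝ := r ⟨J - 1, by omega⟩ with hrJdef
  have hrJ0 : 0 ≤ rJ := by rw [hrJdef, hr]; positivity
  set A : Finset (Fin N) := (Finset.univ.filter (fun i : Fin N => (i : ℕ) < J)).image σ with hA
  set B : Finset (Fin N) := (Finset.univ.filter (fun i : Fin N => (i : ℕ) < j)).image σ' with hB
  have hcardf : ∀ (k : ℕ), k ≤ N →
      (Finset.univ.filter (fun i : Fin N => (i : ℕ) < k)).card = k := by
    intro k hk
    have heq : (Finset.univ.filter (fun i : Fin N => (i : ℕ) < k)) =
        Finset.map (Fin.castLEEmb hk) Finset.univ := by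
      ext t
      simp only [Finset.mem_filter, Finset.mem_univ, true_and, Finset.mem_map,
        Fin.castLEEmb_apply]
      constructor
      · intro ht; exact ⟨⟨t, ht⟩, rfl⟩
      · rintro ⟨a, rfl⟩; exact a.2
    rw [heq, Finset.card_map, Finset.card_univ, Fintype.card_fin]
  have hcardA : A.card = J := by
    rw [hA, Finset.card_image_of_injective _ σ.injective, hcardf J hJ]
  have hcardB : B.card = j := by
    rw [hB, Finset.card_image_of_injective _ σ'.injective, hcardf j (by omega)]
  have hcard : J - j ≤ (A \ B).card := by
    have := Finset.le_card_sdiff B A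
    omega
  -- pointwise bound: rJ^τ ≤ ‖x t‖^τ for t ∈ A \ B
  have hpt : ∀ t ∈ A \ B, rJ ^ τ ≤ ‖x t‖ ^ τ := by
    intro t ht
    obtain ⟨i, hi, rfl⟩ : ∃ i : Fin N, (i : ℕ) < J ∧ σ i = t := by
      have := (Finset.mem_sdiff.1 ht).1
      rw [hA] at this
      simpa using this
    have h1 : rJ ≤ r i := hrA (by simp only [Fin.mk_le_mk, Fin.le_def]; omega)
    rw [hr i] at h1
    exact Real.rpow_le_rpow hrJ0 h1 hτ0.le
  -- step 1
  have step1 : ((J : ℝ) - j) * rJ ^ τ ≤ ∑ t ∈ A \ B, ‖x t‖ ^ τ := by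
    have h1 : ((J : ℝ) - j) * rJ ^ τ ≤ ((A \ B).card : ℝ) * rJ ^ τ := by
      apply mul_le_mul_of_nonneg_right _ (Real.rpow_nonneg hrJ0 τ)
      have : ((J - j : ℕ) : ℝ) ≤ ((A \ B).card : ℝ) := by exact_mod_cast hcard
      rwa [Nat.cast_sub hjJ.le] at this
    refine h1.trans ?_
    have := Finset.card_nsmul_le_sum (A \ B) (fun t => ‖x t‖ ^ τ) (rJ ^ τ) hpt
    simpa [nsmul_eq_mul] using this
  -- step 2: split norm
  have step2 : ∑ t ∈ A \ B, ‖x t‖ ^ τ ≤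
      (∑ t ∈ A \ B, ‖x t - x' t‖ ^ τ) + ∑ t ∈ A \ B, ‖x' t‖ ^ τ := by
    rw [← Finset.sum_add_distrib]
    apply Finset.sum_le_sum
    intro t _
    have htri : ‖x t‖ ≤ ‖x t - x' t‖ + ‖x' t‖ := by
      calc ‖x t‖ = ‖(x t - x' t) + x' t‖ := by ring_nf
        _ ≤ ‖x t - x' t‖ + ‖x' t‖ := norm_add_le _ _
    calc ‖x t‖ ^ τ ≤ (‖x t - x' t‖ + ‖x' t‖) ^ τ :=
          Real.rpow_le_rpow (norm_nonneg _) htri hτ0.le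
      _ ≤ ‖x t - x' t‖ ^ τ + ‖x' t‖ ^ τ :=
          my_rpow_add_le (norm_nonneg _) (norm_nonneg _) hτ0 hτ1
  -- step 3a
  have step3a : ∑ t ∈ A \ B, ‖x t - x' t‖ ^ τ ≤ ∑ i, ‖x i - x' i‖ ^ τ := by
    apply Finset.sum_le_sum_of_subset_of_nonneg (Finset.subset_univ _)
    intro i _ _
    positivity
  -- step 3b
  have step3b : ∑ t ∈ A \ B, ‖x' t‖ ^ τ ≤
      ∑ i ∈ Finset.univ.filter (fun i : Fin N => j ≤ (i : ℕ)), r' i ^ τ := by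
    have hrw : ∀ t ∈ A \ B, ‖x' t‖ ^ τ = r' (σ'.symm t) ^ τ := by
      intro t _
      rw [hr' (σ'.symm t), Equiv.apply_symm_apply]
    rw [Finset.sum_congr rfl hrw]
    have himg : (∑ t ∈ A \ B, r' (σ'.symm t) ^ τ) =
        ∑ i ∈ (A \ B).image σ'.symm, r' i ^ τ :=
      (Finset.sum_image (f := fun i => r' i ^ τ) (g := ⇑σ'.symm)
        (fun a _ b _ h => σ'.symm.injective h)).symm
    rw [himg]
    apply Finset.sum_le_sum_of_subset_of_nonneg
    · intro i hi
      simp only [Finset.mem_image] at hi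
      obtain ⟨t, ht, rfl⟩ := hi
      simp only [Finset.mem_filter, Finset.mem_univ, true_and]
      by_contra hlt
      push_neg at hlt
      have : t ∈ B := by
        rw [hB]
        refine Finset.mem_image.2 ⟨σ'.symm t, ?_, Equiv.apply_symm_apply _ _⟩
        simp [hlt]
      exact (Finset.mem_sdiff.1 ht).2 this
    · intro i _ _
      have : 0 ≤ r' i := by rw [hr']; positivity
      positivity
  linarith
end
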